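/- arXiv:1202.2517 — 3 statements merged into one kernel-verified Lean document; each statement's English description precedes it below -/
import Mathlib

section
/- Bockstein comparison lemma (Lemma 2.1 of the paper, stated abstractly over F[u]): Let p be a prime, F = ℤ/p, and R = F[u] the polynomial ring. Let N and D be R-modules such that every element of N is annihilated by some power of u. Let K be an index set and, for each k ∈ K, let V_k, U_k, W_k be R-modules with u·V_k = 0, u·U_k = 0, and every element of W_k annihilated by some power of u. Suppose given R-linear maps φ : ⊕_k V_k → N and δ : N → D such that the sequence 0 → ⊕_k V_k →(φ) N →(multiplication by u) N →(δ) D is exact; for each k, R-linear maps φ'_k : V_k → W_k and δ'_k : W_k → U_k such that 0 → V_k →(φ'_k) W_k →(multiplication by u) W_k →(δ'_k) U_k is exact; and R-linear maps f_k : W_k → N and ι_k : U_k → D such that ⊕_k ι_k : ⊕_k U_k → D is injective, f_k ∘ φ'_k = φ ∘ (canonical inclusion of V_k into ⊕_k V_k), and δ ∘ f_k = ι_k ∘ δ'_k for every k. Then the map ∑_k f_k : ⊕_k W_k → N is an isomorphism of R-modules. -/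
/-!
A five-lemma argument, by induction on the exponent `m` with `u ^ m` killing an element.
On `ker u` the map `F : ⊕ W k → N` restricts to `φ`, which is injective; this gives injectivity.
For surjectivity, if `u • y = F w` then `δ (F w) = 0`, so `⊕ δ' k` kills `w` (as `⊕ ι` is
injective), hence `w = u • w'`, and `y - F w'` lies in `ker u = range φ ⊆ range F`.
-/

open Polynomial LinearMap DirectSum

/-- The polynomial ring `F[u]` over `F = ℤ/p`; the variable `u` is `Polynomial.X`. -/
abbrev BocksteinBase (p : ℕ) := Polynomial (ZMod p)

section Comparison

variable {R M N : Type*} [CommRing R] [AddCommGroup M] [Module R M] [AddCommGroup N] [Module R N]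
  (u : R) {F : M →ₗ[R] N}

theorem LinearMap.injective_of_disjoint_ker_smul (hM : ∀ x : M, ∃ m : ℕ, u ^ m • x = 0)
    (hF : Disjoint (ker F) (ker (lsmul R M u))) : Function.Injective F := by
  rw [← ker_eq_bot, eq_bot_iff]
  intro x hx
  obtain ⟨m, hm⟩ := hM x
  induction m generalizing x with
  | zero => simpa using hm
  | succ m ih =>
    rw [pow_succ, mul_smul] at hm
    have hux : u • x = 0 := ih (x := u • x) (by simp [mem_ker.mp hx]) hm
    exact hF.le_bot ⟨hx, hux⟩

theorem LinearMap.surjective_of_ker_smul_le_range (hN : ∀ y : N, ∃ m : ℕ, u ^ m • y = 0)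
    (hker : ker (lsmul R N u) ≤ range F)
    (hdiv : (range (lsmul R N u)).comap F ≤ range (lsmul R M u)) : Function.Surjective F := by
  intro y
  obtain ⟨m, hm⟩ := hN y
  induction m generalizing y with
  | zero => exact ⟨0, by simpa using hm.symm⟩
  | succ m ih =>
    rw [pow_succ, mul_smul] at hm
    obtain ⟨x, hx⟩ := ih (u • y) hm
    obtain ⟨x', rfl⟩ := hdiv (show F x ∈ range (lsmul R N u) from hx ▸ ⟨y, rfl⟩)
    obtain ⟨z, hz⟩ := hker (show y - F x' ∈ ker (lsmul R N u) by
      simp only [mem_ker, lsmul_apply, smul_sub, ← map_smul] at hx ⊢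
      rw [hx, sub_self])
    exact ⟨x' + z, by rw [map_add, hz, add_sub_cancel]⟩

theorem bijective_of_exact_smul_of_pow_torsion {A B C : Type*} [AddCommGroup A] [Module R A]
    [AddCommGroup B] [Module R B] [AddCommGroup C] [Module R C]
    (φM : A →ₗ[R] M) (δM : M →ₗ[R] B) (φN : A →ₗ[R] N) (δN : N →ₗ[R] C)
    (hM : ∀ x : M, ∃ m : ℕ, u ^ m • x = 0) (hN : ∀ y : N, ∃ m : ℕ, u ^ m • y = 0)
    (hφM : range φM = ker (lsmul R M u)) (hδM : range (lsmul R M u) = ker δM)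
    (hφN_inj : Function.Injective φN)
    (hφN : range φN = ker (lsmul R N u)) (hδN : range (lsmul R N u) = ker δN)
    (F : M →ₗ[R] N) (ι : B →ₗ[R] C) (hι : Function.Injective ι)
    (hFφ : F ∘ₗ φM = φN) (hδF : δN ∘ₗ F = ι ∘ₗ δM) : Function.Bijective F := by
  refine ⟨F.injective_of_disjoint_ker_smul u hM ?_, F.surjective_of_ker_smul_le_range u hN ?_ ?_⟩
  · rw [Submodule.disjoint_def]
    rintro x hFx hux
    rw [← hφM] at hux
    obtain ⟨a, rfl⟩ := hux
    have hφNa : φN a = 0 := by rwa [← hFφ, comp_apply]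
    rw [hφN_inj (hφNa.trans (map_zero φN).symm), map_zero]
  · rw [← hφN, ← hFφ]
    exact range_comp_le_range φM F
  · rw [hδN, ← ker_comp, hδF, ker_comp, ker_eq_bot.mpr hι, Submodule.comap_bot, hδM]

end Comparison

namespace DirectSum

variable {R K : Type*} [CommRing R]
  {M N P : K → Type*} [∀ k, AddCommGroup (M k)] [∀ k, Module R (M k)]
  [∀ k, AddCommGroup (N k)] [∀ k, Module R (N k)] [∀ k, AddCommGroup (P k)] [∀ k, Module R (P k)]

theorem exists_pow_smul_eq_zero [DecidableEq K] {u : R}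
    (h : ∀ k (x : M k), ∃ m : ℕ, u ^ m • x = 0) (x : ⨁ k, M k) : ∃ m : ℕ, u ^ m • x = 0 := by
  have hx : x ∈ Submodule.torsion' R (⨁ k, M k) (Submonoid.powers u) := by
    induction x using DirectSum.induction_on with
    | zero => exact zero_mem _
    | of k y =>
      obtain ⟨m, hm⟩ := h k y
      refine ⟨⟨u ^ m, pow_mem (Submonoid.mem_powers u) m⟩, ?_⟩
      rw [Submonoid.mk_smul, ← of_smul, hm, map_zero]
    | add a b ha hb => exact add_mem ha hb
  obtain ⟨⟨_, m, rfl⟩, hm⟩ := hx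
  exact ⟨m, hm⟩

theorem lsmul_eq_lmap (u : R) : lsmul R (⨁ k, M k) u = lmap fun k => lsmul R (M k) u := by
  ext x k
  simp [smul_apply]

theorem range_lmap_eq_ker_lmap {f : ∀ k, M k →ₗ[R] N k} {g : ∀ k, N k →ₗ[R] P k}
    (h : ∀ k, range (f k) = ker (g k)) : range (lmap f) = ker (lmap g) := by
  rw [range_lmap, ker_lmap]
  simp_rw [h]

end DirectSum

theorem stmt0_general (p : ℕ)
    (K : Type*) [DecidableEq K]
    (N D : Type*) [AddCommGroup N] [Module (BocksteinBase p) N]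
    [AddCommGroup D] [Module (BocksteinBase p) D]
    (V U W : K → Type*)
    [∀ k, AddCommGroup (V k)] [∀ k, Module (BocksteinBase p) (V k)]
    [∀ k, AddCommGroup (U k)] [∀ k, Module (BocksteinBase p) (U k)]
    [∀ k, AddCommGroup (W k)] [∀ k, Module (BocksteinBase p) (W k)]
    -- `N` is `u`-power-torsion
    (hN : ∀ x : N, ∃ m : ℕ, ((X : BocksteinBase p) ^ m) • x = 0)
    -- each `W k` is `u`-power-torsion
    (hW : ∀ (k : K) (x : W k), ∃ m : ℕ, ((X : BocksteinBase p) ^ m) • x = 0)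
    -- the exact sequence `0 → ⊕ V k → N → N → D`
    (φ : (⨁ k : K, V k) →ₗ[BocksteinBase p] N)
    (δ : N →ₗ[BocksteinBase p] D)
    (hφinj : Function.Injective φ)
    (hex1 : LinearMap.range φ = LinearMap.ker (lsmul (BocksteinBase p) N X))
    (hex2 : LinearMap.range (lsmul (BocksteinBase p) N X) = LinearMap.ker δ)
    -- the exact sequences `0 → V k → W k → W k → U k`
    (φ' : ∀ k, V k →ₗ[BocksteinBase p] W k)
    (δ' : ∀ k, W k →ₗ[BocksteinBase p] U k)
    (hex1' : ∀ k, LinearMap.range (φ' k) = LinearMap.ker (lsmul (BocksteinBase p) (W k) X))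
    (hex2' : ∀ k, LinearMap.range (lsmul (BocksteinBase p) (W k) X) = LinearMap.ker (δ' k))
    -- the comparison maps
    (f : ∀ k, W k →ₗ[BocksteinBase p] N)
    (ι : ∀ k, U k →ₗ[BocksteinBase p] D)
    (hιinj : Function.Injective (DirectSum.toModule (BocksteinBase p) K D ι))
    (hfφ : ∀ k, (f k).comp (φ' k) = φ.comp (DirectSum.lof (BocksteinBase p) K V k))
    (hδf : ∀ k, δ.comp (f k) = (ι k).comp (δ' k)) :
    Function.Bijective (DirectSum.toModule (BocksteinBase p) K N f) := by
  refine bijective_of_exact_smul_of_pow_torsion X (lmap φ') (lmap δ') φ δ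
    (exists_pow_smul_eq_zero hW) hN ?_ ?_ hφinj hex1 hex2 (toModule _ K N f) (toModule _ K D ι)
    hιinj ?_ ?_
  · rw [lsmul_eq_lmap]
    exact range_lmap_eq_ker_lmap hex1'
  · rw [lsmul_eq_lmap]
    exact range_lmap_eq_ker_lmap hex2'
  · refine linearMap_ext _ fun k => LinearMap.ext fun x => ?_
    simpa using LinearMap.congr_fun (hfφ k) x
  · refine linearMap_ext _ fun k => LinearMap.ext fun x => ?_
    simpa using LinearMap.congr_fun (hδf k) x

/-- Bockstein comparison lemma, Lemma 2.1, abstractly over `R = F[u]`: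
given exact sequences `0 → ⊕ V k → N → N → D` (second map multiplication by `u`)
and `0 → V k → W k → W k → U k`, with `N` and each `W k` `u`-power-torsion,
`u • V k = 0`, `u • U k = 0`, compatible maps `f k : W k → N`, `ι k : U k → D`
with `⊕ ι` injective, `f k ∘ φ' k = φ ∘ (inclusion of V k)` and
`δ ∘ f k = ι k ∘ δ' k`, the induced map `⊕ W k → N` is an isomorphism. -/
theorem stmt0 (p : ℕ) (hp : p.Prime)
    (K : Type*) [DecidableEq K]
    (N D : Type*) [AddCommGroup N] [Module (BocksteinBase p) N]
    [AddCommGroup D] [Module (BocksteinBase p) D]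
    (V U W : K → Type*)
    [∀ k, AddCommGroup (V k)] [∀ k, Module (BocksteinBase p) (V k)]
    [∀ k, AddCommGroup (U k)] [∀ k, Module (BocksteinBase p) (U k)]
    [∀ k, AddCommGroup (W k)] [∀ k, Module (BocksteinBase p) (W k)]
    -- `N` is `u`-power-torsion
    (hN : ∀ x : N, ∃ m : ℕ, ((X : BocksteinBase p) ^ m) • x = 0)
    -- `u • V k = 0` and `u • U k = 0`
    (hV : ∀ (k : K) (x : V k), (X : BocksteinBase p) • x = 0)
    (hU : ∀ (k : K) (x : U k), (X : BocksteinBase p) • x = 0)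
    -- each `W k` is `u`-power-torsion
    (hW : ∀ (k : K) (x : W k), ∃ m : ℕ, ((X : BocksteinBase p) ^ m) • x = 0)
    -- the exact sequence `0 → ⊕ V k → N → N → D`
    (φ : (⨁ k : K, V k) →ₗ[BocksteinBase p] N)
    (δ : N →ₗ[BocksteinBase p] D)
    (hφinj : Function.Injective φ)
    (hex1 : LinearMap.range φ = LinearMap.ker (lsmul (BocksteinBase p) N X))
    (hex2 : LinearMap.range (lsmul (BocksteinBase p) N X) = LinearMap.ker δ)
    -- the exact sequences `0 → V k → W k → W k → U k`
    (φ' : ∀ k, V k →ₗ[BocksteinBase p] W k)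
    (δ' : ∀ k, W k →ₗ[BocksteinBase p] U k)
    (hφ'inj : ∀ k, Function.Injective (φ' k))
    (hex1' : ∀ k, LinearMap.range (φ' k) = LinearMap.ker (lsmul (BocksteinBase p) (W k) X))
    (hex2' : ∀ k, LinearMap.range (lsmul (BocksteinBase p) (W k) X) = LinearMap.ker (δ' k))
    -- the comparison maps
    (f : ∀ k, W k →ₗ[BocksteinBase p] N)
    (ι : ∀ k, U k →ₗ[BocksteinBase p] D)
    (hιinj : Function.Injective (DirectSum.toModule (BocksteinBase p) K D ι))
    (hfφ : ∀ k, (f k).comp (φ' k) = φ.comp (DirectSum.lof (BocksteinBase p) K V k))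
    (hδf : ∀ k, δ.comp (f k) = (ι k).comp (δ' k)) :
    Function.Bijective (DirectSum.toModule (BocksteinBase p) K N f) :=
  stmt0_general p K N D V U W hN hW φ δ hφinj hex1 hex2 φ' δ' hex1' hex2' f ι hιinj hfφ hδf
end

section
/- Cyclic summand lemma (Lemma 2.4 of the paper, stated abstractly over F[u]): Let p be a prime, F = ℤ/p, and R = F[u] the polynomial ring. Let C, N, D be R-modules and φ : C → N, δ : N → D be R-linear maps such that the sequence 0 → C →(φ) N →(multiplication by u) N →(δ) D is exact. Let x ∈ N and let a ≥ 1 be an integer such that u^a·x = 0, u^{a−1}·x is a nonzero element of the image of φ, and δ(x) ≠ 0. Then the cyclic R-submodule R·x of N is isomorphic to R/(u^a), and the sequence 0 → F·(u^{a−1}x) → R·x →(multiplication by u) R·x →(restriction of δ) F·δ(x) is exact. -/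
open Polynomial LinearMap

/-- The polynomial ring `F[u]` over `F = ℤ/p`; the variable `u` is `Polynomial.X`. -/
abbrev CyclicBase (p : ℕ) := Polynomial (ZMod p)

/-- Cyclic summand lemma, Lemma 2.4, abstractly over `R = F[u]`:
given an exact sequence `0 → C → N → N → D` (second map multiplication by `u`),
an element `x ∈ N` and `a ≥ 1` with `u^a • x = 0`, `u^(a-1) • x` a nonzero element
of the image of `φ`, and `δ x ≠ 0`, the cyclic submodule `R • x` is isomorphic to
`R/(u^a)` and the sequence
`0 → F • (u^(a-1) x) → R • x → R • x → F • δ(x)` (middle map multiplication by `u`,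
last map the restriction of `δ`) is exact. -/
theorem stmt1 (p : ℕ) (hp : p.Prime)
    (C N D : Type*) [AddCommGroup C] [Module (CyclicBase p) C]
    [AddCommGroup N] [Module (CyclicBase p) N]
    [AddCommGroup D] [Module (CyclicBase p) D]
    (φ : C →ₗ[CyclicBase p] N) (δ : N →ₗ[CyclicBase p] D)
    (hφinj : Function.Injective φ)
    (hex1 : LinearMap.range φ = LinearMap.ker (lsmul (CyclicBase p) N X))
    (hex2 : LinearMap.range (lsmul (CyclicBase p) N X) = LinearMap.ker δ)
    (x : N) (a : ℕ) (ha : 1 ≤ a)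
    (hxa : ((X : CyclicBase p) ^ a) • x = 0)
    (hxne : ((X : CyclicBase p) ^ (a - 1)) • x ≠ 0)
    (hxφ : ((X : CyclicBase p) ^ (a - 1)) • x ∈ LinearMap.range φ)
    (hδx : δ x ≠ 0) :
    -- `R • x ≅ R/(u^a)` as `R`-modules
    Nonempty ((↥(Submodule.span (CyclicBase p) {x})) ≃ₗ[CyclicBase p]
      (CyclicBase p ⧸ Ideal.span {(X : CyclicBase p) ^ a})) ∧
    -- exactness at the first `R • x`: the kernel of multiplication by `u` on `R • x`
    -- is the (injectively embedded) `F`-span of `u^(a-1) • x`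
    (∀ y ∈ Submodule.span (CyclicBase p) {x},
      ((X : CyclicBase p) • y = 0 ↔
        ∃ c : ZMod p, y = (Polynomial.C c : CyclicBase p) • (((X : CyclicBase p) ^ (a - 1)) • x))) ∧
    -- exactness at the second `R • x`: the kernel of the restriction of `δ` is the
    -- image of multiplication by `u` on `R • x`
    (∀ y ∈ Submodule.span (CyclicBase p) {x},
      (δ y = 0 ↔ ∃ z ∈ Submodule.span (CyclicBase p) {x}, y = (X : CyclicBase p) • z)) ∧
    -- the restriction of `δ` indeed lands in the `F`-span of `δ x`
    (∀ y ∈ Submodule.span (CyclicBase p) {x},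
      ∃ c : ZMod p, δ y = (Polynomial.C c : CyclicBase p) • δ x) := by
  haveI := Fact.mk hp
  set R := CyclicBase p with hR
  have hXa : (X : R) ^ (a - 1) * X = X ^ a := by
    rw [← pow_succ, Nat.sub_add_cancel ha]
  -- the kernel of f ↦ f • x is (X^a)
  have hmem : ∀ f : R, f • x = 0 ↔ (X : R) ^ a ∣ f := by
    set K := ker (toSpanSingleton R N x) with hKdef
    have hmemK : ∀ f : R, f ∈ K ↔ f • x = 0 := fun f => by
      rw [hKdef, mem_ker, toSpanSingleton_apply]
    have hXaK : (X : R) ^ a ∈ K := (hmemK _).mpr hxa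
    have hgen : Submodule.IsPrincipal.generator K ∣ (X : R) ^ a :=
      (Submodule.IsPrincipal.mem_iff_generator_dvd K).mp hXaK
    obtain ⟨i, hi, hassoc⟩ := (dvd_prime_pow Polynomial.prime_X a).mp hgen
    have hia : i = a := by
      by_contra hne
      have hile : i ≤ a - 1 := by omega
      have : Submodule.IsPrincipal.generator K ∣ (X : R) ^ (a - 1) :=
        hassoc.dvd.trans (pow_dvd_pow _ hile)
      exact hxne ((hmemK _).mp ((Submodule.IsPrincipal.mem_iff_generator_dvd K).mpr this))
    have hK : K = Ideal.span {(X : R) ^ a} := by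
      rw [← Ideal.span_singleton_generator K]
      exact Ideal.span_singleton_eq_span_singleton.mpr (hia ▸ hassoc)
    intro f
    rw [← hmemK, hK, Ideal.mem_span_singleton]
  -- computation of δ on the cyclic module
  have hδcomp : ∀ f : R, δ (f • x) = (Polynomial.C (f.coeff 0) : R) • δ x := by
    intro f
    have hfdec : f • x = (Polynomial.C (f.coeff 0) : R) • x + (X : R) • (f.divX • x) := by
      conv_lhs => rw [← divX_mul_X_add f]
      rw [add_smul, mul_comm, mul_smul, add_comm]
    have hker : δ ((X : R) • (f.divX • x)) = 0 := by
      have : (X : R) • (f.divX • x) ∈ range (lsmul R N X) := ⟨f.divX • x, lsmul_apply _ _⟩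
      rw [hex2, mem_ker] at this
      exact this
    rw [hfdec, map_add, map_smul, hker, add_zero]
  refine ⟨?_, ?_, ?_, ?_⟩
  · -- the isomorphism
    have hK : ker (toSpanSingleton R N x) = Ideal.span {(X : R) ^ a} := by
      ext f
      rw [mem_ker, toSpanSingleton_apply, Ideal.mem_span_singleton, hmem]
    exact ⟨(LinearEquiv.ofEq _ _ (span_singleton_eq_range R N x)).trans
      ((quotKerEquivRange (toSpanSingleton R N x)).symm.trans
        (Submodule.quotEquivOfEq _ _ hK))⟩
  · -- exactness at the first copy
    intro y hy
    obtain ⟨f, rfl⟩ := Submodule.mem_span_singleton.mp hy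
    constructor
    · intro h
      have h1 : ((X : R) * f) • x = 0 := by rw [mul_smul]; exact h
      obtain ⟨g, hg⟩ := (hmem _).mp h1
      have hfg : f = X ^ (a - 1) * g := by
        apply mul_left_cancel₀ (Polynomial.X_ne_zero (R := ZMod p))
        rw [hg, ← hXa]; ring
      refine ⟨g.coeff 0, ?_⟩
      have expand : ((X : R) ^ (a - 1) * g : R) =
          Polynomial.C (g.coeff 0) * X ^ (a - 1) + g.divX * X ^ a := by
        conv_lhs => rw [← divX_mul_X_add g]
        rw [← hXa]; ring
      rw [hfg, expand, add_smul, mul_smul, mul_smul, hxa, smul_zero, add_zero]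
    · rintro ⟨c, hc⟩
      rw [hc]
      have h1 : (X : R) • (Polynomial.C c : R) • (X : R) ^ (a - 1) • x
          = ((X : R) * ((Polynomial.C c : R) * (X : R) ^ (a - 1))) • x := by
        rw [mul_smul, mul_smul]
      have h2 : ((X : R) * ((Polynomial.C c : R) * (X : R) ^ (a - 1)))
          = (Polynomial.C c : R) * (X : R) ^ a := by rw [← hXa]; ring
      rw [h1, h2, mul_smul, hxa, smul_zero]
  · -- exactness at the second copy
    intro y hy
    obtain ⟨f, rfl⟩ := Submodule.mem_span_singleton.mp hy
    constructor
    · intro h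
      rw [hδcomp f] at h
      have hf0 : f.coeff 0 = 0 := by
        by_contra hc
        apply hδx
        calc δ x = ((Polynomial.C (f.coeff 0)⁻¹ : R) * Polynomial.C (f.coeff 0)) • δ x := by
              rw [← Polynomial.C_mul, inv_mul_cancel₀ hc, Polynomial.C_1, one_smul]
          _ = (Polynomial.C (f.coeff 0)⁻¹ : R) • ((Polynomial.C (f.coeff 0) : R) • δ x) :=
              mul_smul _ _ _
          _ = 0 := by rw [h, smul_zero]
      obtain ⟨g, hg⟩ := Polynomial.X_dvd_iff.mpr hf0
      exact ⟨g • x, Submodule.mem_span_singleton.mpr ⟨g, rfl⟩, by rw [hg, mul_smul]⟩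
    · rintro ⟨z, _, hyz⟩
      rw [hyz]
      have : (X : R) • z ∈ range (lsmul R N X) := ⟨z, lsmul_apply _ _⟩
      rw [hex2, mem_ker] at this
      exact this
  · intro y hy
    obtain ⟨f, rfl⟩ := Submodule.mem_span_singleton.mp hy
    exact ⟨f.coeff 0, hδcomp f⟩
end

section
/- Linear-algebra form of Corollary 1.3 (the cokernel of the Bockstein differential): Let p be an odd prime, n > 3 an integer, and F = ℤ/p. Let E be the F-vector space with basis consisting of symbols ζ_m for m ∈ ℤ and h_{j,m} for j ∈ {0,1,…,n−1} and m ∈ ℤ. Let D ⊆ E be the F-linear span of the set { h_{n−1, s−1} : s ∈ ℤ, p ∤ s } ∪ { h_{[i−1], (sp−1)p^{i−1}} : i ≥ 1, s ∈ ℤ, p ∤ s }. Then the images in E/D of the following elements form an F-basis of E/D: ζ_m for all m ∈ ℤ; h_{n−1, tp−1} for all t ∈ ℤ; h_{j,0} for 0 ≤ j ≤ n−2; and h_{j, s p^k} for 0 ≤ j ≤ n−2, k ≥ 0, and s ∈ ℤ with p ∤ s, subject to the condition that [k] ≠ j, or s ≢ −1 (mod p), or s ≡ −1 (mod p²). -/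
/-! `D` is spanned by part of the standard basis of `E`, namely the vectors indexed by `dIdx`,
so the classes of the remaining basis vectors form a basis of `E/D`; it remains to see that the
listed elements are exactly these, each listed once. For `j ≤ n - 2` this rests on the unique
decomposition `m = s * p ^ k` (`p ∤ s`) of a nonzero integer: `h_{j,m}` lies in `D` iff `[k] = j`
and `s = t * p - 1` with `p ∤ t`, i.e. `s ≡ -1` mod `p` but not mod `p²`, while `h_{j,0}` never
does. For the last column, `h_{n-1,m}` lies in `D` iff `p ∤ m + 1`. -/

namespace Stmt7

/-- Index type for the basis of `E`: `ζ_m` is indexed by `Sum.inl m`, and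
`h_{j,m}` by `Sum.inr (j, m)`. -/
abbrev Idx (n : ℕ) := ℤ ⊕ (Fin n × ℤ)

/-- The `F`-vector space `E` with basis `ζ_m` (`m ∈ ℤ`) and `h_{j,m}`
(`0 ≤ j ≤ n-1`, `m ∈ ℤ`), realized as finitely supported functions. -/
abbrev E (p n : ℕ) := Idx n →₀ ZMod p

/-- The basis vector `ζ_m`. -/
noncomputable def zeta (p n : ℕ) (m : ℤ) : E p n := Finsupp.single (Sum.inl m) 1

/-- The basis vector `h_{j,m}` (for `j < n`; the index is reduced mod `n`). -/
noncomputable def hh (p n : ℕ) (hn : 0 < n) (j : ℕ) (m : ℤ) : E p n :=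
  Finsupp.single (Sum.inr (⟨j % n, Nat.mod_lt _ hn⟩, m)) 1

/-- The subspace `D`, spanned by the `h_{n-1,s-1}` (`p ∤ s`) and the
`h_{[i-1],(sp-1)p^(i-1)}` (`i ≥ 1`, `p ∤ s`), where `[k]` denotes `k % (n-1)`;
it encodes the image of the Bockstein differential `δ` of (1.5). -/
noncomputable def D (p n : ℕ) (hn : 0 < n) : Submodule (ZMod p) (E p n) :=
  Submodule.span (ZMod p)
    ({y | ∃ s : ℤ, ¬ (p : ℤ) ∣ s ∧ y = hh p n hn (n - 1) (s - 1)} ∪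
     {y | ∃ i : ℕ, 1 ≤ i ∧ ∃ s : ℤ, ¬ (p : ℤ) ∣ s ∧
        y = hh p n hn ((i - 1) % (n - 1)) ((s * p - 1) * (p : ℤ) ^ (i - 1))})

/-- Index type for the claimed basis of `E/D`:
`ζ_m` for `m ∈ ℤ`; `h_{n-1,tp-1}` for `t ∈ ℤ`; `h_{j,0}` for `0 ≤ j ≤ n-2`; and
`h_{j,s·p^k}` for `0 ≤ j ≤ n-2`, `k ≥ 0`, `p ∤ s`, subject to `[k] ≠ j`, or
`s ≢ -1 (mod p)`, or `s ≡ -1 (mod p²)`. -/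
def BIdx (p n : ℕ) := ℤ ⊕ ℤ ⊕ Fin (n - 1) ⊕
  {q : ℕ × ℕ × ℤ // q.1 ≤ n - 2 ∧ ¬ (p : ℤ) ∣ q.2.2 ∧
    (q.2.1 % (n - 1) ≠ q.1 ∨ ¬ q.2.2 ≡ -1 [ZMOD (p : ℤ)] ∨ q.2.2 ≡ -1 [ZMOD ((p : ℤ) ^ 2)])}

/-- The elements of `E` whose classes are claimed to form a basis of `E/D`. -/
noncomputable def bElt (p n : ℕ) (hn : 0 < n) : BIdx p n → E p n
  | .inl m => zeta p n m
  | .inr (.inl t) => hh p n hn (n - 1) (t * p - 1)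
  | .inr (.inr (.inl j)) => hh p n hn j 0
  | .inr (.inr (.inr q)) => hh p n hn q.1.1 (q.1.2.2 * (p : ℤ) ^ q.1.2.1)

end Stmt7

open Finsupp Function Set in
theorem Finsupp.linearIndependent_mkQ_supported_single {R α ι : Type*} [Ring R]
    {s : Set α} {f : ι → α} (hf : Injective f) (hrange : range f = sᶜ) :
    LinearIndependent R fun i => (supported R R s).mkQ (single (f i) 1) := by
  refine ((linearIndependent_single_one R α).comp f hf).map ?_
  rw [Submodule.ker_mkQ, range_comp, ← supported_eq_span_single, hrange]
  exact disjoint_supported_supported disjoint_compl_left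

open Finsupp Set in
theorem Finsupp.span_range_mkQ_supported_single {R α ι : Type*} [Ring R]
    {s : Set α} {f : ι → α} (hrange : range f = sᶜ) :
    Submodule.span R (range fun i => (supported R R s).mkQ (single (f i) 1)) = ⊤ := by
  rw [range_comp', Submodule.span_image, range_comp' (fun a => single a (1 : R)),
    ← supported_eq_span_single, hrange, Submodule.map_mkQ_eq_top, ← supported_union,
    union_compl_self, supported_univ]

theorem eq_and_eq_of_mul_pow_eq_mul_pow {α : Type*} [CommMonoidWithZero α] [IsCancelMulZero α]
    {p s t : α} (hp : Prime p) (hs : ¬p ∣ s) (ht : ¬p ∣ t) {k l : ℕ} (h : s * p ^ k = t * p ^ l) :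
    k = l ∧ s = t := by
  have hkl : k = l := by
    have := congrArg (emultiplicity p) h
    rwa [emultiplicity_mul hp, emultiplicity_mul hp, emultiplicity_eq_zero.2 hs,
      emultiplicity_eq_zero.2 ht, emultiplicity_pow_self_of_prime hp,
      emultiplicity_pow_self_of_prime hp, zero_add, zero_add, Nat.cast_inj] at this
  subst hkl
  exact ⟨rfl, mul_right_cancel₀ (pow_ne_zero k hp.ne_zero) h⟩

theorem not_dvd_mul_sub_one {R : Type*} [CommRing R] {p : R} (hp : ¬IsUnit p) (t : R) :
    ¬p ∣ t * p - 1 :=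
  fun h => hp (isUnit_of_dvd_one ((dvd_sub_right (dvd_mul_left p t)).mp h))

theorem Int.modEq_neg_one_iff_dvd {p s : ℤ} : s ≡ -1 [ZMOD p] ↔ p ∣ s + 1 := by
  rw [Int.modEq_comm, Int.modEq_iff_dvd, sub_neg_eq_add]

theorem Int.exists_not_dvd_eq_mul_sub_one_iff {p s : ℤ} (hp : p ≠ 0) :
    (∃ t, ¬p ∣ t ∧ s = t * p - 1) ↔ s ≡ -1 [ZMOD p] ∧ ¬s ≡ -1 [ZMOD p ^ 2] := by
  rw [Int.modEq_neg_one_iff_dvd, Int.modEq_neg_one_iff_dvd, sq]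
  constructor
  · rintro ⟨t, ht, rfl⟩
    rw [sub_add_cancel, mul_dvd_mul_iff_right hp]
    exact ⟨dvd_mul_left p t, ht⟩
  · rintro ⟨⟨t, ht⟩, hsq⟩
    refine ⟨t, fun hpt => hsq (ht ▸ mul_dvd_mul_left p hpt), by linear_combination ht⟩

namespace Stmt7

def dIdx (p n : ℕ) : Set (Idx n)
  | .inl _ => False
  | .inr (j, m) => (j : ℕ) = n - 1 ∧ ¬(p : ℤ) ∣ m + 1 ∨
      ∃ k : ℕ, ∃ s : ℤ, ¬(p : ℤ) ∣ s ∧ (j : ℕ) = k % (n - 1) ∧ m = (s * p - 1) * (p : ℤ) ^ k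

def bIdx (p n : ℕ) (hn : 0 < n) : BIdx p n → Idx n
  | .inl m => .inl m
  | .inr (.inl t) => .inr (⟨n - 1, Nat.sub_lt hn one_pos⟩, t * p - 1)
  | .inr (.inr (.inl j)) => .inr (j.castLE (Nat.sub_le n 1), 0)
  | .inr (.inr (.inr q)) => .inr (⟨q.1.1, by have := q.2.1; omega⟩, q.1.2.2 * (p : ℤ) ^ q.1.2.1)

variable {p n : ℕ}

theorem hh_eq_single (hn : 0 < n) {j : ℕ} (hj : j < n) (m : ℤ) :
    hh p n hn j m = Finsupp.single (.inr (⟨j, hj⟩, m)) 1 := by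
  simp only [hh, Nat.mod_eq_of_lt hj]

theorem bElt_eq_single (hn : 0 < n) (b : BIdx p n) :
    bElt p n hn b = Finsupp.single (bIdx p n hn b) 1 := by
  rcases b with m | t | j | ⟨⟨j, k, s⟩, hj, -⟩
  · rfl
  · exact hh_eq_single hn _ _
  · exact hh_eq_single hn _ _
  · exact hh_eq_single hn _ _

open Finsupp in
theorem D_eq_supported (hn : 1 < n) :
    D p n (Nat.zero_lt_of_lt hn) = supported (ZMod p) (ZMod p) (dIdx p n) := by
  rw [supported_eq_span_single, D]
  congr 1
  ext y
  simp only [Set.mem_union, Set.mem_ofPred_eq, Set.mem_image]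
  have hlast : n - 1 < n := by omega
  constructor
  · rintro (⟨s, hs, rfl⟩ | ⟨i, hi, s, hs, rfl⟩)
    · exact ⟨_, Or.inl ⟨rfl, by simpa using hs⟩, (hh_eq_single _ hlast _).symm⟩
    · have hj : (i - 1) % (n - 1) < n := (Nat.mod_lt _ (by omega)).trans hlast
      exact ⟨_, Or.inr ⟨i - 1, s, hs, rfl, rfl⟩, (hh_eq_single _ hj _).symm⟩
  · rintro ⟨⟨m⟩ | ⟨⟨j, hj⟩, m⟩, ⟨rfl : j = n - 1, hm⟩ | ⟨k, s, hs, rfl, rfl⟩, rfl⟩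
    · exact Or.inl ⟨m + 1, hm, by rw [add_sub_cancel_right, hh_eq_single]⟩
    · exact Or.inr ⟨k + 1, by omega, s, hs, by rw [Nat.add_sub_cancel, hh_eq_single]⟩

theorem bIdx_injective (hp : p.Prime) (hn : 1 < n) :
    Function.Injective (bIdx p n (Nat.zero_lt_of_lt hn)) := by
  have hP : Prime (p : ℤ) := Nat.prime_iff_prime_int.mp hp
  have hne : ∀ {s : ℤ}, ¬(p : ℤ) ∣ s → ∀ k : ℕ, s * (p : ℤ) ^ k ≠ 0 := fun hs k =>
    mul_ne_zero (by rintro rfl; exact hs (dvd_zero _)) (pow_ne_zero k hP.ne_zero)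
  intro b b' h
  rcases b with m | t | j | ⟨⟨j, k, s⟩, hj, hs, _⟩ <;>
  rcases b' with m' | t' | j' | ⟨⟨j', k', s'⟩, hj', hs', _⟩
  all_goals simp only [bIdx, Sum.inl.injEq, Sum.inr.injEq, Prod.mk.injEq, Fin.ext_iff,
    Fin.val_castLE, reduceCtorEq, true_and, and_true] at h
  all_goals try omega
  · rw [h]
  · rw [mul_right_cancel₀ hP.ne_zero (sub_left_injective h)]
  · rw [Fin.ext h]
  · exact (hne hs' k' h.2.symm).elim
  · exact (hne hs k h.2).elim
  · obtain ⟨rfl, rfl⟩ := eq_and_eq_of_mul_pow_eq_mul_pow hP hs hs' h.2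
    obtain rfl := h.1
    rfl

theorem bIdx_not_mem_dIdx (hp : p.Prime) (hn : 1 < n) (b : BIdx p n) :
    bIdx p n (Nat.zero_lt_of_lt hn) b ∉ dIdx p n := by
  have hP : Prime (p : ℤ) := Nat.prime_iff_prime_int.mp hp
  rcases b with m | t | j | ⟨⟨j, k, s⟩, hj, hs, hcond⟩
  · exact id
  · rintro (⟨-, hdvd⟩ | ⟨k, s, -, hk, -⟩)
    · exact hdvd ⟨t, by ring⟩
    · exact (Nat.mod_lt k (Nat.sub_pos_of_lt hn)).ne' hk
  · rintro (⟨hj, -⟩ | ⟨k, s, -, -, h0⟩)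
    · exact absurd hj (by simp only [Fin.val_castLE]; omega)
    · refine mul_ne_zero (fun h => ?_) (pow_ne_zero k hP.ne_zero) h0.symm
      exact not_dvd_mul_sub_one hP.not_isUnit s (h ▸ dvd_zero _)
  · rintro (⟨hj', -⟩ | ⟨k', s', hs', hjk, hm⟩)
    · simp only at hj'
      omega
    · obtain ⟨rfl, hss⟩ :=
        eq_and_eq_of_mul_pow_eq_mul_pow hP hs (not_dvd_mul_sub_one hP.not_isUnit s') hm
      obtain ⟨h1, h2⟩ := (Int.exists_not_dvd_eq_mul_sub_one_iff hP.ne_zero).1 ⟨s', hs', hss⟩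
      simp only at hjk
      rcases hcond with h | h | h
      exacts [h hjk.symm, h h1, h2 h]

theorem exists_bIdx_eq_of_not_mem_dIdx (hp : p.Prime) (hn : 1 < n) {x : Idx n}
    (hx : x ∉ dIdx p n) : ∃ b, bIdx p n (Nat.zero_lt_of_lt hn) b = x := by
  have hP : Prime (p : ℤ) := Nat.prime_iff_prime_int.mp hp
  rcases x with m | ⟨⟨j, hj⟩, m⟩
  · exact ⟨.inl m, rfl⟩
  obtain hjlt | rfl := Nat.lt_or_eq_of_le (Nat.le_sub_one_of_lt hj)
  · by_cases hm : m = 0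
    · exact ⟨.inr (.inr (.inl ⟨j, hjlt⟩)), by rw [hm]; rfl⟩
    obtain ⟨k, s, hs, rfl⟩ := WfDvdMonoid.max_power_factor' hm hP.not_isUnit
    have hcond : k % (n - 1) ≠ j ∨ ¬s ≡ -1 [ZMOD p] ∨ s ≡ -1 [ZMOD (p : ℤ) ^ 2] := by
      by_contra! h
      obtain ⟨t, ht, rfl⟩ := (Int.exists_not_dvd_eq_mul_sub_one_iff hP.ne_zero).2 h.2
      exact hx (Or.inr ⟨k, t, ht, h.1.symm, mul_comm _ _⟩)
    exact ⟨.inr (.inr (.inr ⟨(j, k, s), by omega, hs, hcond⟩)), by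
      simp only [bIdx, mul_comm]⟩
  · have hdvd : (p : ℤ) ∣ m + 1 := by
      by_contra h
      exact hx (Or.inl ⟨rfl, h⟩)
    obtain ⟨t, ht⟩ := hdvd
    exact ⟨.inr (.inl t), by
      simp only [bIdx, Sum.inr.injEq, Prod.mk.injEq, true_and]
      linear_combination -ht⟩

theorem range_bIdx (hp : p.Prime) (hn : 1 < n) :
    Set.range (bIdx p n (Nat.zero_lt_of_lt hn)) = (dIdx p n)ᶜ :=
  Set.ext fun _ => ⟨by rintro ⟨b, rfl⟩; exact bIdx_not_mem_dIdx hp hn b,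
    exists_bIdx_eq_of_not_mem_dIdx hp hn⟩

/-- linear-algebra form of Corollary 1.3: for an odd prime `p` and
`n > 3`, the images in `E/D` of the listed elements form an `F`-basis of `E/D`:
they are linearly independent and span. -/
theorem stmt7 (p n : ℕ) (hp : p.Prime) (hn : 3 < n) :
    LinearIndependent (ZMod p)
      (fun b : BIdx p n =>
        (Submodule.Quotient.mk (bElt p n (by omega) b) :
          E p n ⧸ D p n (by omega))) ∧
    Submodule.span (ZMod p)
      (Set.range (fun b : BIdx p n =>
        (Submodule.Quotient.mk (bElt p n (by omega) b) :
          E p n ⧸ D p n (by omega)))) = ⊤ := by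
  have hn₁ : 1 < n := by omega
  simp only [bElt_eq_single (Nat.zero_lt_of_lt hn₁)]
  rw [D_eq_supported hn₁]
  exact ⟨Finsupp.linearIndependent_mkQ_supported_single (bIdx_injective hp hn₁)
      (range_bIdx hp hn₁),
    Finsupp.span_range_mkQ_supported_single (range_bIdx hp hn₁)⟩

end Stmt7
end
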